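/- Let E be a complete real inner product space, N ≥ 1, and for j = 1,…,N let f_j : E → ℝ be differentiable and L-smooth, and let w_j > 0, S_j > 0 be real constants. Define g : E → ℝ by g(θ) = (1/N)·Σ_{j=1}^N ln(w_j·exp(−f_j(θ)) + S_j). Then for all θ_1, θ_2 ∈ E, ‖∇g(θ_1) − ∇g(θ_2)‖ ≤ L·‖θ_1 − θ_2‖ + (1/N)·Σ_{j=1}^N [ (L/8)·‖θ_1 − θ_2‖²·‖∇f_j(θ_2)‖ + (3/8)·‖θ_1 − θ_2‖·‖∇f_j(θ_2)‖² ]. -/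

import Mathlib

/-! The gradient of `g` is `-(1/N) ∑ⱼ rⱼ(fⱼ θ) • ∇fⱼ θ`, where the responsibility
`r(t) = w e^{-t} / (w e^{-t} + S)` takes values in `[0, 1]` and is `1/4`-Lipschitz, its
derivative being `-r(1 - r)`. Writing
`r₁ ∇f(θ₁) - r₂ ∇f(θ₂) = r₁ (∇f(θ₁) - ∇f(θ₂)) + (r₁ - r₂) ∇f(θ₂)`, the first term is at most
`L ‖θ₁ - θ₂‖` and the second at most `|f(θ₁) - f(θ₂)| / 4 · ‖∇f(θ₂)‖`; the descent lemma
`|f(θ₁) - f(θ₂) - ⟪∇f(θ₂), θ₁ - θ₂⟫| ≤ L/2 ‖θ₁ - θ₂‖²` turns the latter into the remaining terms. -/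

open Finset Real
open scoped RealInnerProductSpace

section GradientCalculus

variable {F : Type*} [NormedAddCommGroup F] [InnerProductSpace ℝ F] [CompleteSpace F]

theorem HasDerivAt.comp_hasGradientAt {h : ℝ → ℝ} {h' : ℝ} {f : F → ℝ} {G x : F}
    (hh : HasDerivAt h h' (f x)) (hf : HasGradientAt f G x) :
    HasGradientAt (h ∘ f) (h' • G) x := by
  rw [hasGradientAt_iff_hasFDerivAt, map_smul]
  exact hh.comp_hasFDerivAt x hf.hasFDerivAt

theorem HasGradientAt.fun_sum {ι : Type*} {s : Finset ι} {f : ι → F → ℝ} {G : ι → F} {x : F}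
    (hf : ∀ i ∈ s, HasGradientAt (f i) (G i) x) :
    HasGradientAt (fun y => ∑ i ∈ s, f i y) (∑ i ∈ s, G i) x := by
  rw [hasGradientAt_iff_hasFDerivAt, map_sum]
  exact HasFDerivAt.fun_sum fun i hi => (hf i hi).hasFDerivAt

theorem HasGradientAt.const_mul {f : F → ℝ} {G x : F} (hf : HasGradientAt f G x) (c : ℝ) :
    HasGradientAt (fun y => c * f y) (c • G) x := by
  rw [hasGradientAt_iff_hasFDerivAt, map_smul]
  exact hf.hasFDerivAt.const_mul c

theorem abs_sub_sub_inner_gradient_le {f : F → ℝ} (hf : Differentiable ℝ f) {L : ℝ}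
    (hL : ∀ a b, ‖gradient f a - gradient f b‖ ≤ L * ‖a - b‖) (x y : F) :
    |f y - f x - ⟪gradient f x, y - x⟫| ≤ L / 2 * ‖y - x‖ ^ 2 := by
  set d := y - x
  have hline (t : ℝ) : HasDerivAt (fun s : ℝ => x + s • d) d t := by
    simpa using ((hasDerivAt_id t).smul_const d).const_add x
  have hderiv (t : ℝ) : HasDerivAt (fun s => f (x + s • d) - f x - s * ⟪gradient f x, d⟫)
      (⟪gradient f (x + t • d), d⟫ - ⟪gradient f x, d⟫) t := by
    have := (hf (x + t • d)).hasGradientAt.hasFDerivAt.comp_hasDerivAt t (hline t)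
    simpa using (this.sub_const (f x)).fun_sub ((hasDerivAt_id t).mul_const ⟪gradient f x, d⟫)
  have hbound : ∀ t ∈ Set.Ico (0 : ℝ) 1,
      ‖⟪gradient f (x + t • d), d⟫ - ⟪gradient f x, d⟫‖ ≤ L * ‖d‖ ^ 2 * t := by
    rintro t ⟨ht, -⟩
    rw [← inner_sub_left, Real.norm_eq_abs]
    calc |⟪gradient f (x + t • d) - gradient f x, d⟫|
        ≤ ‖gradient f (x + t • d) - gradient f x‖ * ‖d‖ := abs_real_inner_le_norm _ _
      _ ≤ L * ‖(x + t • d) - x‖ * ‖d‖ := by gcongr; exact hL _ _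
      _ = L * ‖d‖ ^ 2 * t := by
        rw [add_sub_cancel_left, norm_smul, Real.norm_of_nonneg ht]; ring
  have hB (t : ℝ) : HasDerivAt (fun s => L / 2 * ‖d‖ ^ 2 * s ^ 2) (L * ‖d‖ ^ 2 * t) t :=
    ((hasDerivAt_pow 2 t).const_mul (L / 2 * ‖d‖ ^ 2)).congr_deriv (by push_cast; ring)
  have := image_norm_le_of_norm_deriv_right_le_deriv_boundary
    (fun t _ => (hderiv t).continuousAt.continuousWithinAt)
    (fun t _ => (hderiv t).hasDerivWithinAt) (by simp) hB hbound
    (Set.right_mem_Icc.mpr zero_le_one)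
  simpa [d] using this

end GradientCalculus

noncomputable def responsibility (w S t : ℝ) : ℝ := w * exp (-t) / (w * exp (-t) + S)

section Responsibility

variable {w S : ℝ}

theorem responsibility_nonneg (hw : 0 ≤ w) (hS : 0 < S) (t : ℝ) : 0 ≤ responsibility w S t := by
  unfold responsibility; positivity

theorem responsibility_le_one (hw : 0 ≤ w) (hS : 0 < S) (t : ℝ) : responsibility w S t ≤ 1 := by
  unfold responsibility
  rw [div_le_one (by positivity)]
  linarith

theorem hasDerivAt_log_mul_exp_neg_add (hw : 0 ≤ w) (hS : 0 < S) (t : ℝ) :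
    HasDerivAt (fun t => log (w * exp (-t) + S)) (-responsibility w S t) t := by
  have hu : HasDerivAt (fun t => w * exp (-t)) (-(w * exp (-t))) t := by
    simpa using ((hasDerivAt_neg t).exp).const_mul w
  simpa [responsibility, neg_div] using (hu.add_const S).log (by positivity)

theorem hasDerivAt_responsibility (hw : 0 ≤ w) (hS : 0 < S) (t : ℝ) :
    HasDerivAt (responsibility w S)
      (-(responsibility w S t * (1 - responsibility w S t))) t := by
  have hu : HasDerivAt (fun t => w * exp (-t)) (-(w * exp (-t))) t := by
    simpa using ((hasDerivAt_neg t).exp).const_mul w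
  have hden : w * exp (-t) + S ≠ 0 := by positivity
  refine (hu.fun_div (hu.add_const S) hden).congr_deriv ?_
  simp only [responsibility]
  field_simp
  ring

theorem abs_responsibility_sub_le (hw : 0 ≤ w) (hS : 0 < S) (a b : ℝ) :
    |responsibility w S a - responsibility w S b| ≤ |a - b| / 4 := by
  have hbound (t : ℝ) (_ : t ∈ Set.univ) :
      ‖-(responsibility w S t * (1 - responsibility w S t))‖ ≤ 1 / 4 := by
    rw [norm_neg, Real.norm_eq_abs, abs_of_nonneg (mul_nonneg (responsibility_nonneg hw hS t)
      (sub_nonneg.mpr (responsibility_le_one hw hS t)))]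
    nlinarith [sq_nonneg (2 * responsibility w S t - 1)]
  have := convex_univ.norm_image_sub_le_of_norm_hasDerivWithin_le
    (fun t _ => (hasDerivAt_responsibility hw hS t).hasDerivWithinAt) hbound
    (Set.mem_univ b) (Set.mem_univ a)
  simpa [Real.norm_eq_abs, div_eq_inv_mul] using this

end Responsibility

theorem norm_smul_sub_smul_le {V : Type*} [NormedAddCommGroup V] [NormedSpace ℝ V]
    (a b : ℝ) (u v : V) : ‖a • u - b • v‖ ≤ |a| * ‖u - v‖ + |a - b| * ‖v‖ := by
  calc ‖a • u - b • v‖ = ‖a • (u - v) + (a - b) • v‖ := by congr 1; module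
    _ ≤ |a| * ‖u - v‖ + |a - b| * ‖v‖ := by
      simpa only [norm_smul, Real.norm_eq_abs] using norm_add_le (a • (u - v)) ((a - b) • v)

section Objective

variable {F : Type*} [NormedAddCommGroup F] [InnerProductSpace ℝ F] [CompleteSpace F]

theorem norm_responsibility_smul_gradient_sub_le {w S : ℝ} (hw : 0 ≤ w) (hS : 0 < S)
    {f : F → ℝ} (hf : Differentiable ℝ f) {L : ℝ}
    (hL : ∀ a b, ‖gradient f a - gradient f b‖ ≤ L * ‖a - b‖) (x y : F) :
    ‖responsibility w S (f x) • gradient f x - responsibility w S (f y) • gradient f y‖ ≤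
      L * ‖x - y‖ + (L / 8 * ‖x - y‖ ^ 2 * ‖gradient f y‖ +
        3 / 8 * ‖x - y‖ * ‖gradient f y‖ ^ 2) := by
  set r := responsibility w S
  set G := gradient f y
  have hf_sub : |f x - f y| ≤ ‖G‖ * ‖x - y‖ + L / 2 * ‖x - y‖ ^ 2 := by
    have := abs_sub_sub_inner_gradient_le hf hL y x
    linarith [abs_sub_abs_le_abs_sub (f x - f y) ⟪G, x - y⟫, abs_real_inner_le_norm G (x - y)]
  have hr : |r (f x)| ≤ 1 := by
    rw [abs_of_nonneg (responsibility_nonneg hw hS _)]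
    exact responsibility_le_one hw hS _
  calc ‖r (f x) • gradient f x - r (f y) • G‖
      ≤ |r (f x)| * ‖gradient f x - G‖ + |r (f x) - r (f y)| * ‖G‖ := norm_smul_sub_smul_le _ _ _ _
    _ ≤ L * ‖x - y‖ + |f x - f y| / 4 * ‖G‖ := by
      gcongr ?_ + ?_
      · exact (mul_le_of_le_one_left (norm_nonneg _) hr).trans (hL x y)
      · gcongr
        exact abs_responsibility_sub_le hw hS _ _
    _ ≤ L * ‖x - y‖ + (‖G‖ * ‖x - y‖ + L / 2 * ‖x - y‖ ^ 2) / 4 * ‖G‖ := by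
      gcongr
    _ ≤ L * ‖x - y‖ + (L / 8 * ‖x - y‖ ^ 2 * ‖G‖ + 3 / 8 * ‖x - y‖ * ‖G‖ ^ 2) := by
      nlinarith [mul_nonneg (norm_nonneg (x - y)) (sq_nonneg ‖G‖)]

theorem hasGradientAt_const_mul_sum_log_mul_exp_neg_add {ι : Type*} [Fintype ι]
    {f : ι → F → ℝ} {w S : ι → ℝ} (hw : ∀ j, 0 ≤ w j) (hS : ∀ j, 0 < S j) {x : F}
    (hf : ∀ j, DifferentiableAt ℝ (f j) x) (c : ℝ) :
    HasGradientAt (fun θ => c * ∑ j, log (w j * exp (-f j θ) + S j))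
      (-(c • ∑ j, responsibility (w j) (S j) (f j x) • gradient (f j) x)) x := by
  have := (HasGradientAt.fun_sum (s := univ) fun j _ =>
    (hasDerivAt_log_mul_exp_neg_add (hw j) (hS j) (f j x)).comp_hasGradientAt
      (hf j).hasGradientAt).const_mul c
  simpa only [Function.comp_apply, neg_smul, sum_neg_distrib, smul_neg] using this

end Objective

theorem stmt_6 {E : Type*} [NormedAddCommGroup E] [InnerProductSpace ℝ E] [CompleteSpace E]
    (N : ℕ) (hN : 1 ≤ N)
    (f : Fin N → E → ℝ) (hf : ∀ j, Differentiable ℝ (f j)) (L : ℝ)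
    (hsmooth : ∀ (j : Fin N) (a b : E),
      ‖gradient (f j) a - gradient (f j) b‖ ≤ L * ‖a - b‖)
    (w S : Fin N → ℝ) (hw : ∀ j, 0 < w j) (hS : ∀ j, 0 < S j)
    (g : E → ℝ)
    (hg : ∀ θ, g θ = (1 / (N : ℝ)) * ∑ j, Real.log (w j * Real.exp (-(f j θ)) + S j)) :
    ∀ θ1 θ2 : E,
      ‖gradient g θ1 - gradient g θ2‖ ≤
        L * ‖θ1 - θ2‖ +
          (1 / (N : ℝ)) * ∑ j,
            ((L / 8) * ‖θ1 - θ2‖ ^ 2 * ‖gradient (f j) θ2‖ +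
              (3 / 8) * ‖θ1 - θ2‖ * ‖gradient (f j) θ2‖ ^ 2) := by
  intro θ1 θ2
  have hgrad (θ : E) : gradient g θ =
      -((1 / (N : ℝ)) • ∑ j, responsibility (w j) (S j) (f j θ) • gradient (f j) θ) := by
    rw [funext hg]
    exact (hasGradientAt_const_mul_sum_log_mul_exp_neg_add (fun j => (hw j).le) hS
      (fun j => (hf j) θ) _).gradient
  have hN_pos : (0 : ℝ) < N := by exact_mod_cast hN
  calc ‖gradient g θ1 - gradient g θ2‖
      = 1 / (N : ℝ) * ‖∑ j, (responsibility (w j) (S j) (f j θ1) • gradient (f j) θ1 -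
          responsibility (w j) (S j) (f j θ2) • gradient (f j) θ2)‖ := by
        rw [hgrad, hgrad, neg_sub_neg, norm_sub_rev, ← smul_sub, ← sum_sub_distrib, norm_smul,
          Real.norm_of_nonneg (by positivity)]
    _ ≤ 1 / (N : ℝ) * ∑ _j : Fin N, L * ‖θ1 - θ2‖ + 1 / (N : ℝ) * ∑ j,
          ((L / 8) * ‖θ1 - θ2‖ ^ 2 * ‖gradient (f j) θ2‖ +
            (3 / 8) * ‖θ1 - θ2‖ * ‖gradient (f j) θ2‖ ^ 2) := by
        rw [← mul_add, ← sum_add_distrib]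
        gcongr
        exact (norm_sum_le _ _).trans (sum_le_sum fun j _ =>
          norm_responsibility_smul_gradient_sub_le (hw j).le (hS j) (hf j) (hsmooth j) θ1 θ2)
    _ = _ := by
        rw [sum_const, card_univ, Fintype.card_fin, nsmul_eq_mul, ← mul_assoc,
          one_div_mul_cancel hN_pos.ne', one_mul]
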